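/- arXiv:2408.11644 — 2 statements merged into one kernel-verified Lean document; each statement's English description precedes it below -/
import Mathlib

section
/- For every non-edge uv of G = H(n; p_1, ..., p_t), the graph G + uv contains a subgraph isomorphic to K_{p_1} ∪ K_{p_2} ∪ ... ∪ K_{p_t}. -/
open SimpleGraph Finset

/-- `H` is a subgraph of `G` (up to isomorphism): an injective homomorphism exists. -/
def IsSubgraphOf {α β : Type*} (H : SimpleGraph α) (G : SimpleGraph β) : Prop :=
  ∃ f : α → β, Function.Injective f ∧ ∀ a b, H.Adj a b → G.Adj (f a) (f b)

/-- `G` is `H`-saturated. -/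
def IsSat {α β : Type*} (G : SimpleGraph α) (H : SimpleGraph β) : Prop :=
  ¬ IsSubgraphOf H G ∧
    ∀ u v : α, u ≠ v → ¬ G.Adj u v →
      IsSubgraphOf H (G ⊔ SimpleGraph.fromEdgeSet {s(u, v)})

/-- First position of block `i` (for `2 ≤ i`) in `H(n; p₁, …, p_t)`. -/
def blockStart (p : ℕ → ℕ) (i : ℕ) : ℕ :=
  (p 1 - 2) + ∑ j ∈ Finset.Ico 2 i, (p j + 1)

def inBlock (p : ℕ → ℕ) (i : ℕ) (a : ℕ) : Prop :=
  blockStart p i ≤ a ∧ a < blockStart p i + (p i + 1)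

/-- `H(n; p₁, …, p_t) = K_{p₁-2} ∨ (K_{p₂+1} ∪ ⋯ ∪ K_{p_t+1} ∪ I_m)`. -/
def Hgraph (n t : ℕ) (p : ℕ → ℕ) : SimpleGraph (Fin n) :=
  SimpleGraph.fromRel (fun u v =>
    (u : ℕ) < p 1 - 2 ∨ ∃ i, 2 ≤ i ∧ i ≤ t ∧ inBlock p i (u : ℕ) ∧ inBlock p i (v : ℕ))

/-- The disjoint union `K_{p₁} ∪ K_{p₂} ∪ ⋯ ∪ K_{p_t}`. -/
def cliqueUnion (t : ℕ) (p : ℕ → ℕ) :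
    SimpleGraph (Σ i : Fin t, Fin (p ((i : ℕ) + 1))) where
  Adj a b := a ≠ b ∧ a.1 = b.1
  symm := ⟨fun a b h => ⟨h.1.symm, h.2.symm⟩⟩
  loopless := ⟨fun a h => h.1 rfl⟩

/-- The disjoint union `K_{p₂} ∪ ⋯ ∪ K_{p_t}`. -/
def cliqueUnionTail (t : ℕ) (p : ℕ → ℕ) :
    SimpleGraph (Σ i : Fin (t - 1), Fin (p ((i : ℕ) + 2))) where
  Adj a b := a ≠ b ∧ a.1 = b.1
  symm := ⟨fun a b h => ⟨h.1.symm, h.2.symm⟩⟩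
  loopless := ⟨fun a h => h.1 rfl⟩

/-! The new edge `uv` joins two vertices outside the core `K_{p₁-2}` lying in different blocks.
So the core together with `u, v` is a clique on `p₁` vertices, and each block `K_{p_k+1}`, with
whichever of `u, v` it contains removed, still holds a `K_{p_k}`; these cliques are disjoint. -/

theorem isSubgraphOf_cliqueUnion {V : Type*} {G : SimpleGraph V} {t : ℕ} {p : ℕ → ℕ}
    (s : Fin t → Finset V) (hclique : ∀ i, G.IsClique (s i : Set V))
    (hcard : ∀ i : Fin t, p (i + 1) ≤ #(s i)) (hdisj : Pairwise fun i j => Disjoint (s i) (s j)) :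
    IsSubgraphOf (cliqueUnion t p) G := by
  let e : ∀ i : Fin t, Fin (p ((i : ℕ) + 1)) ↪ s i := fun i =>
    (Fin.castLEEmb (hcard i)).trans (s i).equivFin.symm.toEmbedding
  refine ⟨fun a => e a.1 a.2, ?_, ?_⟩
  · rintro ⟨i, j⟩ ⟨i', j'⟩ (h : (e i j : V) = e i' j')
    obtain rfl : i = i' := by
      by_contra hii
      exact Finset.disjoint_left.mp (hdisj hii) (e i j).2 (h ▸ (e i' j').2)
    exact congrArg (Sigma.mk i) ((e i).injective (Subtype.ext h))
  · rintro ⟨i, j⟩ ⟨i', j'⟩ ⟨hne, rfl : i = i'⟩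
    exact hclique i (e i j).2 (e i j').2 fun h =>
      hne (congrArg (Sigma.mk i) ((e i).injective (Subtype.ext h)))

section blocks

variable {p : ℕ → ℕ}

lemma blockStart_succ {k : ℕ} (hk : 2 ≤ k) :
    blockStart p (k + 1) = blockStart p k + (p k + 1) := by
  rw [blockStart, blockStart, sum_Ico_succ_top hk, Nat.add_assoc]

lemma blockStart_mono : Monotone (blockStart p) := fun _ _ h =>
  Nat.add_le_add_left (sum_le_sum_of_subset (Ico_subset_Ico_right h)) _

lemma sub_two_le_blockStart (k : ℕ) : p 1 - 2 ≤ blockStart p k :=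
  Nat.le_add_right _ _

lemma eq_of_inBlock_of_inBlock {i k a : ℕ} (hi : 2 ≤ i) (hk : 2 ≤ k)
    (hai : inBlock p i a) (hak : inBlock p k a) : i = k := by
  unfold inBlock at hai hak
  rcases lt_trichotomy i k with h | h | h
  · have := blockStart_succ (p := p) hi ▸ blockStart_mono (Nat.succ_le_of_lt h)
    omega
  · exact h
  · have := blockStart_succ (p := p) hk ▸ blockStart_mono (Nat.succ_le_of_lt h)
    omega

end blocks

lemma Hgraph_adj {n t : ℕ} {p : ℕ → ℕ} {x y : Fin n} :
    (Hgraph n t p).Adj x y ↔ x ≠ y ∧ ((x : ℕ) < p 1 - 2 ∨ (y : ℕ) < p 1 - 2 ∨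
      ∃ k, 2 ≤ k ∧ k ≤ t ∧ inBlock p k x ∧ inBlock p k y) := by
  rw [Hgraph, fromRel_adj]
  grind

lemma Hgraph_nonadj {n t : ℕ} {p : ℕ → ℕ} {x y : Fin n} (hxy : x ≠ y)
    (h : ¬ (Hgraph n t p).Adj x y) :
    p 1 - 2 ≤ x ∧ p 1 - 2 ≤ y ∧ ∀ k, 2 ≤ k → k ≤ t → inBlock p k x → ¬ inBlock p k y := by
  simpa [Hgraph_adj, hxy] using h

instance (p : ℕ → ℕ) (k a : ℕ) : Decidable (inBlock p k a) :=
  inferInstanceAs (Decidable (_ ∧ _))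

section cliques

variable {p : ℕ → ℕ} {u v : ℕ}

def coreClique (p : ℕ → ℕ) (u v : ℕ) : Finset ℕ :=
  insert u (insert v (range (p 1 - 2)))

/-- At most one of `u, v` lies in block `k`; erasing `v` when `u` does not is harmless. -/
def blockClique (p : ℕ → ℕ) (u v k : ℕ) : Finset ℕ :=
  (Ico (blockStart p k) (blockStart p k + (p k + 1))).erase (if inBlock p k u then u else v)

def addEdgeCliques (p : ℕ → ℕ) (u v : ℕ) : ℕ → Finset ℕ
  | 0 => coreClique p u v
  | i + 1 => blockClique p u v (i + 2)

lemma le_card_coreClique (huv : u ≠ v) (hu : p 1 - 2 ≤ u) (hv : p 1 - 2 ≤ v) :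
    p 1 ≤ #(coreClique p u v) := by
  rw [coreClique, card_insert_of_notMem, card_insert_of_notMem, card_range]
  · omega
  · simpa using hv
  · simp [huv, hu]

lemma le_card_blockClique (k : ℕ) : p k ≤ #(blockClique p u v k) := by
  have := pred_card_le_card_erase (s := Ico (blockStart p k) (blockStart p k + (p k + 1)))
    (a := if inBlock p k u then u else v)
  rw [Nat.card_Ico] at this
  exact this.trans' (by omega)

lemma inBlock_of_mem_blockClique {k m : ℕ} (hm : m ∈ blockClique p u v k) : inBlock p k m :=
  mem_Ico.mp (mem_of_mem_erase hm)

lemma ne_of_mem_blockClique {k m : ℕ} (hsep : inBlock p k u → ¬ inBlock p k v)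
    (hm : m ∈ blockClique p u v k) : m ≠ u ∧ m ≠ v := by
  have hmk := inBlock_of_mem_blockClique hm
  rw [blockClique, mem_erase] at hm
  split_ifs at hm with hu
  · exact ⟨hm.1, fun h => hsep hu (h ▸ hmk)⟩
  · exact ⟨fun h => hu (h ▸ hmk), hm.1⟩

lemma disjoint_coreClique_blockClique {k : ℕ} (hsep : inBlock p k u → ¬ inBlock p k v) :
    Disjoint (coreClique p u v) (blockClique p u v k) := by
  refine disjoint_right.mpr fun m hm hcore => ?_
  obtain ⟨hmu, hmv⟩ := ne_of_mem_blockClique hsep hm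
  have := sub_two_le_blockStart (p := p) k
  have := (inBlock_of_mem_blockClique hm).1
  simp only [coreClique, mem_insert, mem_range] at hcore
  omega

lemma le_card_addEdgeCliques (huv : u ≠ v) (hu : p 1 - 2 ≤ u) (hv : p 1 - 2 ≤ v) :
    ∀ i, p (i + 1) ≤ #(addEdgeCliques p u v i)
  | 0 => le_card_coreClique huv hu hv
  | i + 1 => le_card_blockClique (i + 2)

variable {t : ℕ}

lemma disjoint_addEdgeCliques
    (hsep : ∀ k, 2 ≤ k → k ≤ t → inBlock p k u → ¬ inBlock p k v) :
    ∀ {i j}, i < t → j < t → i ≠ j → Disjoint (addEdgeCliques p u v i) (addEdgeCliques p u v j)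
  | 0, 0, _, _, h => absurd rfl h
  | 0, j + 1, _, hj, _ => disjoint_coreClique_blockClique (hsep _ (by omega) hj)
  | i + 1, 0, hi, _, _ => (disjoint_coreClique_blockClique (hsep _ (by omega) hi)).symm
  | i + 1, j + 1, _, _, h => disjoint_left.mpr fun _ hi hj =>
      h (by have := eq_of_inBlock_of_inBlock (by omega) (by omega)
              (inBlock_of_mem_blockClique hi) (inBlock_of_mem_blockClique hj); omega)

lemma lt_of_mem_addEdgeCliques {n : ℕ} (hu : u < n) (hv : v < n)
    (hn : blockStart p (t + 1) ≤ n) {i m : ℕ} (hi : i < t) (hm : m ∈ addEdgeCliques p u v i) :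
    m < n := by
  cases i with
  | zero =>
    have := (sub_two_le_blockStart (p := p) (t + 1))
    simp only [addEdgeCliques, coreClique, mem_insert, mem_range] at hm
    omega
  | succ i =>
    have := (inBlock_of_mem_blockClique hm).2
    rw [← blockStart_succ (by omega)] at this
    have := blockStart_mono (p := p) (show i + 2 + 1 ≤ t + 1 by omega)
    omega

end cliques

lemma Disjoint.attachFin {n : ℕ} {s t : Finset ℕ} (h : Disjoint s t) (hs : ∀ m ∈ s, m < n)
    (ht : ∀ m ∈ t, m < n) : Disjoint (s.attachFin hs) (t.attachFin ht) :=
  disjoint_left.mpr fun _ hms hmt =>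
    disjoint_left.mp h ((mem_attachFin hs).mp hms) ((mem_attachFin ht).mp hmt)

lemma isClique_addEdgeCliques {n t : ℕ} {p : ℕ → ℕ} {u v : Fin n} {i : ℕ} (hi : i < t)
    (h : ∀ m ∈ addEdgeCliques p u v i, m < n) :
    (Hgraph n t p ⊔ fromEdgeSet {s(u, v)}).IsClique
      ((addEdgeCliques p u v i).attachFin h : Set (Fin n)) := by
  intro x hx y hy hxy
  simp only [mem_coe, mem_attachFin] at hx hy
  rw [sup_adj, Hgraph_adj]
  cases i with
  | zero =>
    simp only [addEdgeCliques, coreClique, mem_insert, mem_range] at hx hy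
    rcases hx with hx | hx | hx <;> rcases hy with hy | hy | hy <;>
      first
      | exact Or.inl ⟨hxy, by omega⟩
      | exact Or.inr ⟨by simp [Fin.ext hx, Fin.ext hy, Sym2.eq_swap], hxy⟩
  | succ i =>
    exact Or.inl ⟨hxy, Or.inr (Or.inr ⟨i + 2, by omega, hi, inBlock_of_mem_blockClique hx,
      inBlock_of_mem_blockClique hy⟩)⟩

theorem Hgraph_add_edge_contains_general (n t : ℕ) (p : ℕ → ℕ)
    (hfit : blockStart p (t + 1) + 1 ≤ n) :
    ∀ u v : Fin n, u ≠ v → ¬ (Hgraph n t p).Adj u v →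
      IsSubgraphOf (cliqueUnion t p)
        (Hgraph n t p ⊔ SimpleGraph.fromEdgeSet {s(u, v)}) := by
  intro u v huv hnadj
  obtain ⟨hu, hv, hsep⟩ := Hgraph_nonadj huv hnadj
  have hlt (i : Fin t) : ∀ m ∈ addEdgeCliques p u v i, m < n := fun _ =>
    lt_of_mem_addEdgeCliques u.isLt v.isLt (by omega) i.isLt
  refine isSubgraphOf_cliqueUnion (fun i => (addEdgeCliques p u v i).attachFin (hlt i))
    (fun i => isClique_addEdgeCliques i.isLt (hlt i)) (fun i => ?_) (fun i j hij => ?_)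
  · rw [card_attachFin]
    exact le_card_addEdgeCliques (Fin.val_injective.ne huv) hu hv i
  · exact (disjoint_addEdgeCliques hsep i.isLt j.isLt (Fin.val_injective.ne hij)).attachFin _ _

/-- Adding any non-edge to `H(n; p₁, …, p_t)` creates a copy of `K_{p₁} ∪ ⋯ ∪ K_{p_t}`. -/
theorem Hgraph_add_edge_contains (n t : ℕ) (p : ℕ → ℕ) (ht : 2 ≤ t) (hp1 : 2 ≤ p 1)
    (hmono : ∀ i j, 1 ≤ i → i ≤ j → j ≤ t → p i ≤ p j)
    (hfit : blockStart p (t + 1) + 1 ≤ n) :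
    ∀ u v : Fin n, u ≠ v → ¬ (Hgraph n t p).Adj u v →
      IsSubgraphOf (cliqueUnion t p)
        (Hgraph n t p ⊔ SimpleGraph.fromEdgeSet {s(u, v)}) :=
  Hgraph_add_edge_contains_general n t p hfit
end

section
/- Suppose t ≥ 2, n > 3(p_1 - 2) + Σ_{i=2}^t p_i(p_i+1), G is a (K_{p_1} ∪ ... ∪ K_{p_t})-saturated graph of order n with e(G) ≤ e(H(n; p_1, ..., p_t)), and v is a minimum-degree vertex of G with neighborhood S. Then the number of edges of the induced subgraph G[V(G) \ S] is at most Σ_{i=2}^t C(p_i+1, 2). -/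
open SimpleGraph Finset

/-!
Write `q = p₁ - 2`, `d = deg v`, `S = N(v)` and `B = V \ N[v]`, so that `G[V \ S]` is `G[B]`
plus the isolated vertex `v`. For `u ∈ B`, adding the edge `uv` creates a copy of
`K_{p₁} ∪ ⋯ ∪ K_{p_t}` through `uv`; the other vertices of its clique through `uv` form a clique of
size at least `q` in the common neighbourhood of `u` and `v`. Counting the edges inside `S`, at `v`,
between `S` and `B`, and inside `B`, once directly and once through the minimum degree, bounds
`2 e(G)` from below, while the degree sequence of `H(n; p₁, …, p_t)` bounds it from above by
`q(n - 1) + (n - q)q + Σ (p_i + 1)p_i`. Comparing the two forces `d ≤ 2q` and then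
`e(G[B]) ≤ Σ C(p_i + 1, 2)`.
-/

section Saturation

variable {α V : Type*} {F : SimpleGraph α} {G : SimpleGraph V} {u v : V}

theorem exists_embedding_of_isSubgraphOf_sup_edge (hF : ¬ IsSubgraphOf F G)
    (hF' : IsSubgraphOf F (G ⊔ fromEdgeSet {s(u, v)})) :
    ∃ f : α → V, Function.Injective f ∧ ∃ a b, F.Adj a b ∧ f a = u ∧ f b = v ∧
      ∀ x y, F.Adj x y → s(x, y) ≠ s(a, b) → G.Adj (f x) (f y) := by
  obtain ⟨f, hf, hhom⟩ := hF'
  obtain ⟨a, b, hab, hG⟩ : ∃ a b, F.Adj a b ∧ ¬ G.Adj (f a) (f b) := by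
    by_contra! h
    exact hF ⟨f, hf, h⟩
  have hnew : s(f a, f b) = s(u, v) := by
    have h := hhom a b hab
    rw [sup_adj, fromEdgeSet_adj, Set.mem_singleton_iff] at h
    exact (h.resolve_left hG).1
  have hold : ∀ x y, F.Adj x y → s(x, y) ≠ s(a, b) → G.Adj (f x) (f y) := by
    intro x y hxy hne
    have h := hhom x y hxy
    rw [sup_adj, fromEdgeSet_adj, Set.mem_singleton_iff] at h
    refine h.resolve_right fun h => hne (Sym2.map.injective hf ?_)
    simp only [Sym2.map_mk, h.1, hnew]
  rcases Sym2.eq_iff.1 hnew with ⟨ha, hb⟩ | ⟨ha, hb⟩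
  · exact ⟨f, hf, a, b, hab, ha, hb, hold⟩
  · refine ⟨f, hf, b, a, hab.symm, hb, ha, fun x y hxy hne => hold x y hxy ?_⟩
    rwa [Sym2.eq_swap (a := a)]

theorem IsSat.exists_isClique_subset_commonNeighbors {t : ℕ} {p : ℕ → ℕ}
    (hsat : IsSat G (cliqueUnion t p)) (huv : u ≠ v) (hnadj : ¬ G.Adj u v) :
    ∃ i : Fin t, ∃ T : Finset V, p (i + 1) - 2 ≤ #T ∧ G.IsClique (T : Set V) ∧
      (T : Set V) ⊆ G.commonNeighbors u v := by
  classical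
  obtain ⟨f, hf, a, b, hab, rfl, rfl, hG⟩ :=
    exists_embedding_of_isSubgraphOf_sup_edge hsat.1 (hsat.2 u v huv hnadj)
  -- `C` is the clique `K_{p_i}` of the union containing the edge `ab`.
  set C := univ.map (Function.Embedding.sigmaMk (β := fun i : Fin t => Fin (p (i + 1))) a.1)
  set K := (C.erase a).erase b
  have hK₁ : ∀ x ∈ K, x.1 = a.1 := by
    simp only [K, C, mem_erase, mem_map, mem_univ, true_and]
    rintro _ ⟨-, -, z, rfl⟩
    rfl
  have hK : ∀ x ∈ K, ∀ y, y.1 = a.1 → x ≠ y → G.Adj (f x) (f y) := by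
    intro x hx y hy hxy
    refine hG x y ⟨hxy, (hK₁ x hx).trans hy.symm⟩ fun h => ?_
    simp only [K, mem_erase] at hx
    rcases Sym2.eq_iff.1 h with ⟨h, -⟩ | ⟨h, -⟩
    exacts [hx.2.1 h, hx.1 h]
  refine ⟨a.1, K.map ⟨f, hf⟩, ?_, ?_, ?_⟩
  · calc p (a.1 + 1) - 2 = #C - 1 - 1 := by simp [C, Nat.sub_sub]
      _ ≤ #(C.erase a) - 1 := Nat.sub_le_sub_right pred_card_le_card_erase 1
      _ ≤ #K := pred_card_le_card_erase
      _ = _ := (card_map _).symm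
  · rw [coe_map]
    rintro _ ⟨x, hx, rfl⟩ _ ⟨y, hy, rfl⟩ hne
    exact hK x hx y (hK₁ y hy) (ne_of_apply_ne f hne)
  · rw [coe_map]
    rintro _ ⟨x, hx, rfl⟩
    have hxa : x ≠ a := by rintro rfl; simp [K] at hx
    have hxb : x ≠ b := by rintro rfl; simp [K] at hx
    exact ⟨(hK x hx a rfl hxa).symm, (hK x hx b hab.2.symm hxb).symm⟩

theorem IsSat.exists_isClique_subset_neighborFinset_inter [Fintype V] [DecidableEq V]
    [DecidableRel G.Adj] {t : ℕ} {p : ℕ → ℕ} (hsat : IsSat G (cliqueUnion t p))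
    (hmono : ∀ i j, 1 ≤ i → i ≤ j → j ≤ t → p i ≤ p j) (huv : u ≠ v) (hnadj : ¬ G.Adj v u) :
    ∃ T : Finset V, p 1 - 2 ≤ #T ∧ G.IsClique (T : Set V) ∧
      T ⊆ G.neighborFinset u ∩ G.neighborFinset v := by
  obtain ⟨i, T, hT, hTc, hTuv⟩ :=
    hsat.exists_isClique_subset_commonNeighbors huv fun h => hnadj h.symm
  have := hmono 1 (i + 1) le_rfl (by omega) (by omega)
  refine ⟨T, by omega, hTc, fun x hx => ?_⟩
  simpa [commonNeighbors] using hTuv hx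

end Saturation

namespace SimpleGraph

variable {V : Type*} [Fintype V] (G : SimpleGraph V) [DecidableRel G.Adj]

theorem card_mul_degree_le_two_mul_card_edgeFinset {v : V}
    (hmin : ∀ u, G.degree v ≤ G.degree u) :
    Fintype.card V * G.degree v ≤ 2 * #G.edgeFinset := by
  rw [← sum_degrees_eq_twice_card_edges, ← card_univ, ← smul_eq_mul]
  exact card_nsmul_le_sum _ _ _ fun u _ => hmin u

variable [DecidableEq V]

theorem sum_card_neighborFinset_inter_comm (s t : Finset V) :
    ∑ x ∈ s, #(G.neighborFinset x ∩ t) = ∑ y ∈ t, #(G.neighborFinset y ∩ s) := by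
  have := sum_card_bipartiteAbove_eq_sum_card_bipartiteBelow (s := s) (t := t) (r := G.Adj)
  simp only [bipartiteAbove, bipartiteBelow] at this
  convert this using 3 with x _ y _ <;> ext <;> simp [adj_comm, and_comm]

theorem card_neighborFinset_inter_add_card_inter_compl (s : Finset V) (x : V) :
    #(G.neighborFinset x ∩ s) + #(G.neighborFinset x ∩ sᶜ) = G.degree x := by
  rw [← sdiff_eq_inter_compl, card_inter_add_card_sdiff, card_neighborFinset_eq_degree]

theorem two_mul_card_edgeFinset_eq_sum (s : Finset V) :
    2 * #G.edgeFinset = ∑ x ∈ s, #(G.neighborFinset x ∩ s) +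
      2 * ∑ x ∈ sᶜ, #(G.neighborFinset x ∩ s) + ∑ x ∈ sᶜ, #(G.neighborFinset x ∩ sᶜ) := by
  rw [← sum_degrees_eq_twice_card_edges, ← sum_add_sum_compl s]
  simp only [← card_neighborFinset_inter_add_card_inter_compl G s, sum_add_distrib,
    sum_card_neighborFinset_inter_comm G s sᶜ]
  ring

theorem two_mul_ncard_edgeSet_induce (s : Finset V) :
    2 * (G.induce (s : Set V)).edgeSet.ncard = ∑ x ∈ s, #(G.neighborFinset x ∩ s) := by
  rw [← coe_edgeFinset, Set.ncard_coe_finset, ← sum_degrees_eq_twice_card_edges,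
    ← sum_coe_sort s]
  refine sum_congr rfl fun x _ => ?_
  rw [← card_neighborFinset_eq_degree, ← card_map (.subtype (· ∈ (s : Set V)))]
  convert congrArg card (map_neighborFinset_induce (G := G) x) using 2 <;> ext <;> simp

variable {G} in
theorem IsClique.card_mul_pred_le_sum_card_neighborFinset_inter {s T : Finset V}
    (hT : G.IsClique (T : Set V)) (hTs : T ⊆ s) :
    #T * (#T - 1) ≤ ∑ x ∈ s, #(G.neighborFinset x ∩ s) := by
  calc #T * (#T - 1) = ∑ x ∈ T, #(T.erase x) := by
        rw [sum_congr rfl fun x hx => card_erase_of_mem hx, sum_const, smul_eq_mul]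
    _ ≤ ∑ x ∈ T, #(G.neighborFinset x ∩ s) := by
        refine sum_le_sum fun x hx => card_le_card fun y hy => ?_
        rw [mem_erase] at hy
        rw [mem_inter, mem_neighborFinset]
        exact ⟨hT hx hy.2 hy.1.symm, hTs hy.2⟩
    _ ≤ ∑ x ∈ s, #(G.neighborFinset x ∩ s) := sum_le_sum_of_subset hTs

theorem le_two_mul_card_edgeFinset_of_isClique {v : V} {q : ℕ}
    (hmin : ∀ u, G.degree v ≤ G.degree u)
    (hcl : ∀ u, u ≠ v → ¬ G.Adj v u → ∃ T : Finset V, q ≤ #T ∧ G.IsClique (T : Set V) ∧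
      T ⊆ G.neighborFinset u ∩ G.neighborFinset v)
    (hu : ∃ u, u ≠ v ∧ ¬ G.Adj v u) :
    q * (q - 1) + 2 * G.degree v + 2 * ((Fintype.card V - G.degree v - 1) * q) +
        2 * (G.induce (G.neighborSet v)ᶜ).edgeSet.ncard ≤ 2 * #G.edgeFinset ∧
      q * (q - 1) + G.degree v + (Fintype.card V - G.degree v - 1) * q +
        (Fintype.card V - G.degree v) * G.degree v ≤ 2 * #G.edgeFinset := by
  set S := G.neighborFinset v
  have hsplit := two_mul_card_edgeFinset_eq_sum G S
  have hm := two_mul_ncard_edgeSet_induce G Sᶜ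
  rw [coe_compl, coe_neighborFinset] at hm
  have hS : q * (q - 1) ≤ ∑ x ∈ S, #(G.neighborFinset x ∩ S) := by
    obtain ⟨u, huv, hvu⟩ := hu
    obtain ⟨T, hqT, hT, hTuv⟩ := hcl u huv hvu
    exact (Nat.mul_le_mul hqT (Nat.sub_le_sub_right hqT 1)).trans
      (hT.card_mul_pred_le_sum_card_neighborFinset_inter (hTuv.trans inter_subset_right))
  have hcard : #Sᶜ = Fintype.card V - G.degree v := by
    rw [card_compl, card_neighborFinset_eq_degree]
  have hv : v ∈ Sᶜ := by simp [S]
  have hcross : G.degree v + (Fintype.card V - G.degree v - 1) * q ≤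
      ∑ x ∈ Sᶜ, #(G.neighborFinset x ∩ S) := by
    rw [← add_sum_erase _ _ hv, inter_self, card_neighborFinset_eq_degree]
    gcongr
    rw [← hcard, ← card_erase_of_mem hv, ← smul_eq_mul]
    refine card_nsmul_le_sum _ _ _ fun u hu => ?_
    simp only [mem_erase, mem_compl, S, mem_neighborFinset] at hu
    obtain ⟨T, hqT, -, hTuv⟩ := hcl u hu.1 hu.2
    exact hqT.trans (card_le_card hTuv)
  have hdeg : (Fintype.card V - G.degree v) * G.degree v ≤
      ∑ x ∈ Sᶜ, #(G.neighborFinset x ∩ S) + ∑ x ∈ Sᶜ, #(G.neighborFinset x ∩ Sᶜ) := by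
    rw [← sum_add_distrib, ← hcard, ← smul_eq_mul]
    exact card_nsmul_le_sum _ _ _ fun u _ =>
      (hmin u).trans (card_neighborFinset_inter_add_card_inter_compl G S u).ge
  constructor <;> omega

end SimpleGraph

theorem two_mul_choose_two_succ (k : ℕ) : 2 * (k + 1).choose 2 = (k + 1) * k := by
  have := Nat.add_one_mul_choose_eq k 1
  rw [Nat.choose_one_right] at this
  rw [this, mul_comm]

theorem sum_mul_succ_eq_two_mul_sum_choose_two {ι : Type*} (s : Finset ι) (f : ι → ℕ) :
    ∑ i ∈ s, f i * (f i + 1) = 2 * ∑ i ∈ s, (f i + 1).choose 2 := by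
  rw [mul_sum]
  exact sum_congr rfl fun i _ => by rw [two_mul_choose_two_succ, mul_comm]

theorem le_sum_choose_two_of_mem {ι : Type*} {s : Finset ι} {f : ι → ℕ} {i : ι} (hi : i ∈ s) :
    f i ≤ ∑ j ∈ s, (f j + 1).choose 2 :=
  calc f i ≤ (f i + 1).choose 2 := by rw [Nat.choose_succ_succ, Nat.choose_one_right]; omega
    _ ≤ _ := single_le_sum (f := fun j => (f j + 1).choose 2) (fun _ _ => Nat.zero_le _) hi

instance (p : ℕ → ℕ) (i : ℕ) : DecidablePred (inBlock p i) :=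
  fun _ => inferInstanceAs (Decidable (_ ∧ _))

theorem card_filter_inBlock_le (n : ℕ) (p : ℕ → ℕ) (i : ℕ) :
    #{x : Fin n | inBlock p i x} ≤ p i + 1 := by
  calc #{x : Fin n | inBlock p i x} ≤ #(Ico (blockStart p i) (blockStart p i + (p i + 1))) :=
        card_le_card_of_injOn Fin.val
          (fun x hx => by simpa [inBlock] using (mem_filter.1 (mem_coe.1 hx)).2)
          Fin.val_injective.injOn
    _ = p i + 1 := by simp

open Classical in
theorem degree_Hgraph_le (n t : ℕ) (p : ℕ → ℕ) (x : Fin n) :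
    (Hgraph n t p).degree x ≤ (if x < p 1 - 2 then n - 1 else p 1 - 2) +
      ∑ i ∈ Icc 2 t, if inBlock p i x then p i else 0 := by
  split_ifs with hx
  · have := (Hgraph n t p).degree_lt_card_verts x
    simp only [Fintype.card_fin] at this
    omega
  have hsub : (Hgraph n t p).neighborFinset x ⊆ ({y | y < p 1 - 2} : Finset (Fin n)) ∪
      {i ∈ Icc 2 t | inBlock p i x}.biUnion
        fun i => ({y | inBlock p i y} : Finset (Fin n)).erase x := by
    intro y hy
    rw [mem_neighborFinset, Hgraph, fromRel_adj] at hy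
    simp only [mem_union, mem_filter, mem_univ, true_and, mem_biUnion, mem_Icc, mem_erase]
    obtain ⟨hxy, (hx' | ⟨i, h2i, hit, hxi, hyi⟩) | (hy' | ⟨i, h2i, hit, hyi, hxi⟩)⟩ := hy
    · exact absurd hx' hx
    · exact .inr ⟨i, ⟨⟨h2i, hit⟩, hxi⟩, hxy.symm, hyi⟩
    · exact .inl hy'
    · exact .inr ⟨i, ⟨⟨h2i, hit⟩, hxi⟩, hxy.symm, hyi⟩
  calc (Hgraph n t p).degree x
      ≤ #({y | y < p 1 - 2} : Finset (Fin n)) +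
          ∑ i ∈ Icc 2 t with inBlock p i x, #(({y | inBlock p i y} : Finset (Fin n)).erase x) :=
        (card_le_card hsub).trans <| (card_union_le _ _).trans <| by gcongr; exact card_biUnion_le
    _ ≤ p 1 - 2 + ∑ i ∈ Icc 2 t with inBlock p i x, p i := by
        gcongr with i
        · rw [Fin.card_filter_val_lt]; exact min_le_right _ _
        · rw [card_erase_of_mem (by simp_all)]
          have := card_filter_inBlock_le n p i
          omega
    _ = _ := by rw [sum_filter]

theorem two_mul_ncard_edgeSet_Hgraph_le (n t : ℕ) (p : ℕ → ℕ) (hn : p 1 - 2 ≤ n) :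
    2 * (Hgraph n t p).edgeSet.ncard ≤
      (p 1 - 2) * (n - 1) + (n - (p 1 - 2)) * (p 1 - 2) +
        2 * ∑ i ∈ Icc 2 t, (p i + 1).choose 2 := by
  classical
  rw [← coe_edgeFinset, Set.ncard_coe_finset, ← sum_degrees_eq_twice_card_edges]
  refine (sum_le_sum fun x _ => degree_Hgraph_le n t p x).trans ?_
  rw [sum_add_distrib, sum_comm]
  simp only [sum_ite, sum_const, smul_eq_mul, mul_zero, add_zero]
  have hlt : #{x : Fin n | x < p 1 - 2} = p 1 - 2 := by
    rw [Fin.card_filter_val_lt, min_eq_right hn]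
  have hge : #{x : Fin n | ¬ x < p 1 - 2} = n - (p 1 - 2) := by
    rw [filter_not, card_sdiff_of_subset (filter_subset _ _), hlt, card_univ, Fintype.card_fin]
  rw [hlt, hge, mul_sum]
  refine Nat.add_le_add_left (sum_le_sum fun i _ => ?_) _
  rw [two_mul_choose_two_succ]
  exact Nat.mul_le_mul_right _ (card_filter_inBlock_le n p i)

theorem le_two_mul_of_mul_le {q c d n E : ℕ} (hdeg : n * d ≤ 2 * E)
    (hH : 2 * E ≤ q * (n - 1) + (n - q) * q + 2 * c) (hn : 2 * c < n) : d ≤ 2 * q := by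
  refine Nat.lt_succ_iff.1 (Nat.lt_of_mul_lt_mul_left (a := n) ?_)
  calc n * d ≤ q * (n - 1) + (n - q) * q + 2 * c := hdeg.trans hH
    _ ≤ q * n + n * q + 2 * c := by gcongr <;> omega
    _ < n * (2 * q + 1) := by linarith

theorem le_of_edge_count_bounds {q c d n m E : ℕ} (hd : d ≤ 2 * q) (hn : 3 * q + 2 * c < n)
    (hqc : q ≤ c) (hH : 2 * E ≤ q * (n - 1) + (n - q) * q + 2 * c)
    (h₁ : q * (q - 1) + 2 * d + 2 * ((n - d - 1) * q) + 2 * m ≤ 2 * E)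
    (h₂ : q * (q - 1) + d + (n - d - 1) * q + (n - d) * d ≤ 2 * E) : m ≤ c := by
  obtain ⟨N, hN⟩ : ∃ N, n = N + d + 1 := ⟨n - d - 1, by omega⟩
  rw [show n - d - 1 = N by omega] at h₁ h₂
  rw [show n - d = N + 1 by omega] at h₂
  rw [show n - 1 = N + d by omega, show n - q = N + d + 1 - q by omega] at hH
  subst hN
  have hqq : ((q * (q - 1) : ℕ) : ℤ) = q * (q - 1) := by
    rcases q with _ | q <;> simp
  zify [show q ≤ N + d + 1 by omega] at *
  rw [hqq] at h₁ h₂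
  have hJ₁ : (m : ℤ) ≤ c + (d - q) * (q - 1) := by nlinarith
  have hJ₂ : (N : ℤ) * (d - q) + 2 * (d - q) ≤ 2 * q * (d - q) + 2 * c := by nlinarith
  -- With `r = d - q`: if `m > c`, `hJ₁` forces `r ≥ 1`, and then `hJ₂` together with
  -- `N > 2q + 2c - r` gives `2c(r - 1) + 2r ≤ r²`, impossible since `r ≤ q ≤ c`.
  by_contra! hmc
  have hr : (1 : ℤ) ≤ d - q := by
    by_contra! h
    rcases (Int.natCast_nonneg q).lt_or_eq with hq | hq
    · nlinarith
    · rw [← hq] at hd hJ₁; nlinarith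
  nlinarith [mul_le_mul_of_nonneg_left hn.le (sub_nonneg.2 (show 0 ≤ (d : ℤ) - q by linarith)),
    mul_nonneg (sub_nonneg.2 (show (d : ℤ) - q ≤ c by linarith)) (sub_nonneg.2 hr)]

/-- The induced subgraph on `V(G) \ S` has at most `Σ_{i=2}^t C(p_i+1, 2)` edges. -/
theorem induced_edge_bound (n t : ℕ) (p : ℕ → ℕ) (ht : 2 ≤ t) (hp1 : 2 ≤ p 1)
    (hmono : ∀ i j, 1 ≤ i → i ≤ j → j ≤ t → p i ≤ p j)
    (hn : 3 * (p 1 - 2) + ∑ i ∈ Finset.Icc 2 t, p i * (p i + 1) < n)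
    (G : SimpleGraph (Fin n)) (hsat : IsSat G (cliqueUnion t p))
    (hE : G.edgeSet.ncard ≤ (Hgraph n t p).edgeSet.ncard)
    (v : Fin n)
    (hmin : ∀ u, (G.neighborSet v).ncard ≤ (G.neighborSet u).ncard) :
    ((G.induce ((G.neighborSet v)ᶜ)).edgeSet.ncard ≤
      ∑ i ∈ Finset.Icc 2 t, (p i + 1).choose 2) := by
  classical
  rw [sum_mul_succ_eq_two_mul_sum_choose_two] at hn
  set q := p 1 - 2
  set c := ∑ i ∈ Icc 2 t, (p i + 1).choose 2
  have hqc : q + 2 ≤ c :=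
    (show q + 2 ≤ p 2 by have := hmono 1 2 le_rfl one_le_two ht; omega).trans
      (le_sum_choose_two_of_mem (mem_Icc.2 ⟨le_rfl, ht⟩))
  have hEH : 2 * #G.edgeFinset ≤ q * (n - 1) + (n - q) * q + 2 * c := by
    rw [← Set.ncard_coe_finset, coe_edgeFinset]
    exact (Nat.mul_le_mul_left 2 hE).trans (two_mul_ncard_edgeSet_Hgraph_le n t p (by omega))
  have hmin' : ∀ u, G.degree v ≤ G.degree u := fun u => by
    simpa only [Set.ncard_eq_toFinset_card', ← neighborFinset_def,
      card_neighborFinset_eq_degree] using hmin u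
  have hdeg := G.card_mul_degree_le_two_mul_card_edgeFinset hmin'
  rw [Fintype.card_fin] at hdeg
  have hd : G.degree v ≤ 2 * q := le_two_mul_of_mul_le hdeg hEH (by omega)
  have hu : ∃ u, u ≠ v ∧ ¬ G.Adj v u := by
    obtain ⟨u, -, hu⟩ := exists_mem_notMem_of_card_lt_card (s := insert v (G.neighborFinset v))
      (t := univ) ((card_insert_le _ _).trans_lt (by simp; omega))
    rw [mem_insert, not_or, mem_neighborFinset] at hu
    exact ⟨u, hu⟩
  obtain ⟨h₁, h₂⟩ := G.le_two_mul_card_edgeFinset_of_isClique hmin'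
    (fun u huv hvu => hsat.exists_isClique_subset_neighborFinset_inter hmono huv hvu) hu
  rw [Fintype.card_fin] at h₁ h₂
  exact le_of_edge_count_bounds hd (by omega) (by omega) hEH h₁ h₂
end
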